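/- arXiv:1406.7852 — 6 statements merged into one kernel-verified Lean document; each statement's English description precedes it below -/
import Mathlib

section
/- Let c1 > 0, Θ > 0, c2 ∈ ℝ, α = c2/Θ, ρ* > 0 and 0 < R1 < R2. On the annulus D = {x ∈ ℝ² : R1 < |x| < R2} define ρ(x) = ρ* |x|^α and Ω(x) = (x₂, −x₁)/|x|. Then for every x ∈ D: (i) |Ω(x)| = 1; (ii) ∂₁(ρΩ₁)(x) + ∂₂(ρΩ₂)(x) = 0; (iii) c2 ρ(x) ((Ω·∇)Ω)(x) + Θ (∇ρ(x) − (Ω(x)·∇ρ(x)) Ω(x)) = 0, where ((Ω·∇)Ω)_j = Ω₁ ∂₁Ω_j + Ω₂ ∂₂Ω_j for j = 1,2. Moreover Ω(x)·x = 0, so Ω is tangent to the boundary circles |x| = R1 and |x| = R2. -/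
open Real Set

/-! With `r = |x|`, the gradient `∇ρ = α ρ x / r²` is radial while `Ω` is tangential, so
`Ω·∇ρ = 0`; together with `∇·Ω = 0` this gives (ii). The convective term `(Ω·∇)Ω = -x / r²` is the
centripetal acceleration of uniform circular motion, so (iii) reduces to
`(Θ α - c2) ρ x / r² = 0`. -/

/-- partial derivative in the first coordinate of a function on `ℝ²`. -/
noncomputable def pd1 (f : ℝ × ℝ → ℝ) (p : ℝ × ℝ) : ℝ := deriv (fun s => f (s, p.2)) p.1

/-- partial derivative in the second coordinate of a function on `ℝ²`. -/
noncomputable def pd2 (f : ℝ × ℝ → ℝ) (p : ℝ × ℝ) : ℝ := deriv (fun s => f (p.1, s)) p.2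

theorem hasDerivAt_sqrt_sq_add_sq_fst {a b : ℝ} (h : a ^ 2 + b ^ 2 ≠ 0) :
    HasDerivAt (fun s => √(s ^ 2 + b ^ 2)) (a / √(a ^ 2 + b ^ 2)) a := by
  convert ((hasDerivAt_pow 2 a).add_const (b ^ 2)).sqrt h using 1
  field_simp
  ring

theorem hasDerivAt_sqrt_sq_add_sq_snd {a b : ℝ} (h : a ^ 2 + b ^ 2 ≠ 0) :
    HasDerivAt (fun t => √(a ^ 2 + t ^ 2)) (b / √(a ^ 2 + b ^ 2)) b := by
  simpa only [add_comm _ (a ^ 2)] using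
    hasDerivAt_sqrt_sq_add_sq_fst (a := b) (b := a) (by rwa [add_comm])

theorem HasDerivAt.const_mul_rpow_const {N : ℝ → ℝ} {N' x : ℝ} (hN : HasDerivAt N N' x)
    (hN0 : N x ≠ 0) (c α : ℝ) :
    HasDerivAt (fun s => c * N s ^ α) (α * (c * N x ^ α) * N' / N x) x := by
  refine ((hN.rpow_const (p := α) (Or.inl hN0)).const_mul c).congr_deriv ?_
  rw [rpow_sub_one hN0]
  ring

theorem stmt_1_general (c2 Θ α ρstar R1 R2 : ℝ)
    (hΘ : 0 < Θ) (hα : α = c2 / Θ)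
    (hR1 : 0 < R1)
    (nrm : ℝ × ℝ → ℝ) (hnrm : ∀ x, nrm x = Real.sqrt (x.1 ^ 2 + x.2 ^ 2))
    (ρ : ℝ × ℝ → ℝ) (hρ : ∀ x, ρ x = ρstar * nrm x ^ α)
    (Ω1 Ω2 : ℝ × ℝ → ℝ)
    (hΩ1 : ∀ x, Ω1 x = x.2 / nrm x) (hΩ2 : ∀ x, Ω2 x = -x.1 / nrm x) :
    ∀ x : ℝ × ℝ, R1 < nrm x → nrm x < R2 →
      -- (i) |Ω(x)| = 1
      (Ω1 x ^ 2 + Ω2 x ^ 2 = 1) ∧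
      -- (ii) ∇·(ρΩ) = 0
      (pd1 (fun y => ρ y * Ω1 y) x + pd2 (fun y => ρ y * Ω2 y) x = 0) ∧
      -- (iii) j = 1 component of c2 ρ (Ω·∇)Ω + Θ (∇ρ − (Ω·∇ρ)Ω) = 0
      (c2 * ρ x * (Ω1 x * pd1 Ω1 x + Ω2 x * pd2 Ω1 x) +
        Θ * (pd1 ρ x - (Ω1 x * pd1 ρ x + Ω2 x * pd2 ρ x) * Ω1 x) = 0) ∧
      -- (iii) j = 2 component
      (c2 * ρ x * (Ω1 x * pd1 Ω2 x + Ω2 x * pd2 Ω2 x) +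
        Θ * (pd2 ρ x - (Ω1 x * pd1 ρ x + Ω2 x * pd2 ρ x) * Ω2 x) = 0) ∧
      -- Ω is tangent to the circles |x| = const
      (Ω1 x * x.1 + Ω2 x * x.2 = 0) := by
  obtain rfl := funext hnrm
  obtain rfl := funext hρ
  obtain rfl := funext hΩ1
  obtain rfl := funext hΩ2
  have hc2 : c2 = α * Θ := by rw [hα, div_mul_cancel₀ _ hΘ.ne']
  rintro ⟨a, b⟩ hR1x -
  have hr : 0 < √(a ^ 2 + b ^ 2) := hR1.trans hR1x
  have hab : a ^ 2 + b ^ 2 ≠ 0 := (sqrt_pos.mp hr).ne'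
  have hN1 := hasDerivAt_sqrt_sq_add_sq_fst hab
  have hN2 := hasDerivAt_sqrt_sq_add_sq_snd hab
  have hρ1 := hN1.const_mul_rpow_const hr.ne' ρstar α
  have hρ2 := hN2.const_mul_rpow_const hr.ne' ρstar α
  have hΩ11 := (hasDerivAt_const a b).fun_div hN1 hr.ne'
  have hΩ12 := (hasDerivAt_id' b).fun_div hN2 hr.ne'
  have hΩ21 := (hasDerivAt_neg a).fun_div hN1 hr.ne'
  have hΩ22 := (hasDerivAt_const b (-a)).fun_div hN2 hr.ne'
  simp only [pd1, pd2]
  rw [(hρ1.fun_mul hΩ11).deriv, (hρ2.fun_mul hΩ22).deriv, hρ1.deriv, hρ2.deriv, hΩ11.deriv,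
    hΩ12.deriv, hΩ21.deriv, hΩ22.deriv, hc2]
  refine ⟨?_, ?_, ?_, ?_, ?_⟩ <;> field_simp
  · linear_combination -sq_sqrt (sqrt_pos.mp hr).le
  all_goals ring

/-- the pair `ρ(x) = ρ* |x|^α`, `Ω(x) = (x₂,−x₁)/|x|` is a perfectly
polarized steady state of the SOH model on the annulus `R1 < |x| < R2`, tangent to the
boundary circles. -/
theorem stmt_1 (c1 c2 Θ α ρstar R1 R2 : ℝ)
    (hc1 : 0 < c1) (hΘ : 0 < Θ) (hα : α = c2 / Θ) (hρstar : 0 < ρstar)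
    (hR1 : 0 < R1) (hR12 : R1 < R2)
    (nrm : ℝ × ℝ → ℝ) (hnrm : ∀ x, nrm x = Real.sqrt (x.1 ^ 2 + x.2 ^ 2))
    (ρ : ℝ × ℝ → ℝ) (hρ : ∀ x, ρ x = ρstar * nrm x ^ α)
    (Ω1 Ω2 : ℝ × ℝ → ℝ)
    (hΩ1 : ∀ x, Ω1 x = x.2 / nrm x) (hΩ2 : ∀ x, Ω2 x = -x.1 / nrm x) :
    ∀ x : ℝ × ℝ, R1 < nrm x → nrm x < R2 →
      -- (i) |Ω(x)| = 1
      (Ω1 x ^ 2 + Ω2 x ^ 2 = 1) ∧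
      -- (ii) ∇·(ρΩ) = 0
      (pd1 (fun y => ρ y * Ω1 y) x + pd2 (fun y => ρ y * Ω2 y) x = 0) ∧
      -- (iii) j = 1 component of c2 ρ (Ω·∇)Ω + Θ (∇ρ − (Ω·∇ρ)Ω) = 0
      (c2 * ρ x * (Ω1 x * pd1 Ω1 x + Ω2 x * pd2 Ω1 x) +
        Θ * (pd1 ρ x - (Ω1 x * pd1 ρ x + Ω2 x * pd2 ρ x) * Ω1 x) = 0) ∧
      -- (iii) j = 2 component
      (c2 * ρ x * (Ω1 x * pd1 Ω2 x + Ω2 x * pd2 Ω2 x) +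
        Θ * (pd2 ρ x - (Ω1 x * pd1 ρ x + Ω2 x * pd2 ρ x) * Ω2 x) = 0) ∧
      -- Ω is tangent to the circles |x| = const
      (Ω1 x * x.1 + Ω2 x * x.2 = 0) :=
  stmt_1_general c2 Θ α ρstar R1 R2 hΘ hα hR1 nrm hnrm ρ hρ Ω1 Ω2 hΩ1 hΩ2
end

section
/- Let c1 > 0, Θ > 0, c2 ∈ ℝ, α = c2/Θ, ρ* > 0, ρ_s(r) = ρ* r^α, and 0 < R1 < R2. Let ρ̃, φ̃ : [R1,R2] × ℝ × ℝ → ℝ be continuously differentiable functions of (r,θ,t). For ε ∈ ℝ set ρ^ε = ρ_s(r) + ε ρ̃(r,θ,t) and φ^ε = −π/2 + ε φ̃(r,θ,t), and define F₁(ε) = ∂_t ρ^ε + (c1/r)[∂_r(r ρ^ε cos φ^ε) + ∂_θ(ρ^ε sin φ^ε)] and F₂(ε) = ∂_t φ^ε + c2(cos φ^ε ∂_r φ^ε + (sin φ^ε / r) ∂_θ φ^ε + sin φ^ε / r) + (Θ/ρ^ε)((cos φ^ε / r) ∂_θ ρ^ε − sin φ^ε ∂_r ρ^ε). Then at every point (r,θ,t)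 ∈ (R1,R2) × ℝ × ℝ: F₁(0) = 0, F₂(0) = 0, the maps ε ↦ F₁(ε) and ε ↦ F₂(ε) are differentiable at ε = 0, and (d/dε)F₁(ε)|_{ε=0} = ∂_t ρ̃ + c1 ρ_s(r) ∂_r φ̃ − (c1/r) ∂_θ ρ̃ + (c1/r)(1+α) ρ_s(r) φ̃, (d/dε)F₂(ε)|_{ε=0} = ∂_t φ̃ + (c2/(α ρ_s(r))) ∂_r ρ̃ − (c2/r) ∂_θ φ̃ − (c2/(r ρ_s(r))) ρ̃. -/
/-!
Along `ρ^ε = ρ_s + ε ρ̃`, `φ^ε = -π/2 + ε φ̃` every partial derivative at a point is affine in `ε`,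
so each left-hand side is a fixed smooth function of `ε` and of the values of `ρ̃, φ̃` and their
first partial derivatives there, whose `ε`-derivative at `0` is a first-variation computation.
At `φ = -π/2` one has `cos φ = 0` and `sin φ = -1`, which kills most terms. The profile
`ρ_s = ρ* r^α` satisfies `r ρ_s' = α ρ_s`; with `Θ α = c2` this makes the unperturbed alignment
term `-c2/r + Θ ρ_s'/ρ_s` vanish and produces the coefficients `1 + α` and `c2/(r ρ_s)`.
-/

open Real

noncomputable section

def partialR (f : ℝ → ℝ → ℝ → ℝ) (r θ t : ℝ) : ℝ := deriv (fun s => f s θ t) r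

def partialθ (f : ℝ → ℝ → ℝ → ℝ) (r θ t : ℝ) : ℝ := deriv (fun s => f r s t) θ

def partialT (f : ℝ → ℝ → ℝ → ℝ) (r θ t : ℝ) : ℝ := deriv (fun s => f r θ s) t

section Partials

variable {f : ℝ → ℝ → ℝ → ℝ} {r θ t : ℝ}

theorem hasDerivAt_partialR
    (hf : DifferentiableAt ℝ (fun p : ℝ × ℝ × ℝ => f p.1 p.2.1 p.2.2) (r, θ, t)) :
    HasDerivAt (fun s => f s θ t) (partialR f r θ t) r := by
  have hline : DifferentiableAt ℝ (fun s : ℝ => (s, θ, t)) r := by fun_prop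
  exact (hf.comp r hline).hasDerivAt

theorem hasDerivAt_partialθ
    (hf : DifferentiableAt ℝ (fun p : ℝ × ℝ × ℝ => f p.1 p.2.1 p.2.2) (r, θ, t)) :
    HasDerivAt (fun s => f r s t) (partialθ f r θ t) θ := by
  have hline : DifferentiableAt ℝ (fun s : ℝ => (r, s, t)) θ := by fun_prop
  exact (hf.comp θ hline).hasDerivAt

theorem hasDerivAt_partialT
    (hf : DifferentiableAt ℝ (fun p : ℝ × ℝ × ℝ => f p.1 p.2.1 p.2.2) (r, θ, t)) :
    HasDerivAt (fun s => f r θ s) (partialT f r θ t) t := by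
  have hline : DifferentiableAt ℝ (fun s : ℝ => (r, θ, s)) t := by fun_prop
  exact (hf.comp t hline).hasDerivAt

end Partials

theorem hasDerivAt_const_mul_rpow (c α : ℝ) {r : ℝ} (hr : 0 < r) :
    HasDerivAt (fun s => c * s ^ α) (α * (c * r ^ α) / r) r := by
  refine ((hasDerivAt_rpow_const (Or.inl hr.ne')).const_mul c).congr_deriv ?_
  rw [rpow_sub_one hr.ne']
  ring

/-- The left-hand sides of the two equations with the derivatives expanded by the product rule,
as functions of the values of `ρ, φ` and of their first partial derivatives at one point
(`ρr = ∂_r ρ`, `ρθ = ∂_θ ρ`, ...). -/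
def massResidual (c1 r ρ ρr ρθ ρt φ φr φθ : ℝ) : ℝ :=
  ρt + c1 / r * ((ρ + r * ρr) * cos φ - r * ρ * sin φ * φr + (ρθ * sin φ + ρ * cos φ * φθ))

def alignResidual (c2 Θ r ρ ρr ρθ φ φr φθ φt : ℝ) : ℝ :=
  φt + c2 * (cos φ * φr + sin φ / r * φθ + sin φ / r) + Θ / ρ * (cos φ / r * ρθ - sin φ * ρr)

section Linearization

variable {c1 c2 Θ α r ρ₀ ρ₀' : ℝ}

theorem hasDerivAt_const_add_mul_const (a c : ℝ) {x : ℝ} :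
    HasDerivAt (fun ε : ℝ => a + ε * c) c x :=
  (hasDerivAt_mul_const c).const_add a

theorem hasDerivAt_massResidual (ρ ρr ρθ ρt φ φr φθ : ℝ) (hr : r ≠ 0)
    (hss : r * ρ₀' = α * ρ₀) :
    HasDerivAt
      (fun ε => massResidual c1 r (ρ₀ + ε * ρ) (ρ₀' + ε * ρr) (ε * ρθ) (ε * ρt)
        (-(π / 2) + ε * φ) (ε * φr) (ε * φθ))
      (ρt + c1 * ρ₀ * φr - c1 / r * ρθ + c1 / r * (1 + α) * ρ₀ * φ) 0 := by
  have hψ : HasDerivAt (fun ε : ℝ => -(π / 2) + ε * φ) φ 0 := hasDerivAt_const_add_mul_const _ _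
  have hcos := hψ.cos
  have hsin := hψ.sin
  have hρ : HasDerivAt (fun ε : ℝ => ρ₀ + ε * ρ) ρ 0 := hasDerivAt_const_add_mul_const _ _
  refine ((hasDerivAt_mul_const ρt).add
    (((((hρ.add ((hasDerivAt_const_add_mul_const ρ₀' ρr).const_mul r)).mul hcos).sub
      (((hρ.const_mul r).mul hsin).mul (hasDerivAt_mul_const φr))).add
      (((hasDerivAt_mul_const ρθ).mul hsin).add
        ((hρ.mul hcos).mul (hasDerivAt_mul_const φθ)))).const_mul (c1 / r))).congr_deriv ?_
  simp only [Pi.add_apply, Pi.mul_apply, zero_mul, mul_zero, add_zero, zero_add, cos_neg, sin_neg,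
    cos_pi_div_two, sin_pi_div_two]
  field_simp
  linear_combination c1 * φ * hss

theorem hasDerivAt_alignResidual (ρ ρr ρθ φ φr φθ φt : ℝ) (hr : r ≠ 0) (hρ₀ : ρ₀ ≠ 0)
    (hss : r * ρ₀' = α * ρ₀) (hαΘ : α * Θ = c2) :
    HasDerivAt
      (fun ε => alignResidual c2 Θ r (ρ₀ + ε * ρ) (ρ₀' + ε * ρr) (ε * ρθ)
        (-(π / 2) + ε * φ) (ε * φr) (ε * φθ) (ε * φt))
      (φt + Θ / ρ₀ * ρr - c2 / r * φθ - c2 / (r * ρ₀) * ρ) 0 := by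
  have hψ : HasDerivAt (fun ε : ℝ => -(π / 2) + ε * φ) φ 0 := hasDerivAt_const_add_mul_const _ _
  have hcos := hψ.cos
  have hsin := hψ.sin
  have hinv := (hasDerivAt_const_add_mul_const ρ₀ ρ (x := 0)).inv (by simpa using hρ₀)
  refine (((hasDerivAt_mul_const φt).add
    ((((hcos.mul (hasDerivAt_mul_const φr)).add
      ((hsin.div_const r).mul (hasDerivAt_mul_const φθ))).add (hsin.div_const r)).const_mul c2)).add
    ((hinv.const_mul Θ).mul (((hcos.div_const r).mul (hasDerivAt_mul_const ρθ)).sub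
      (hsin.mul (hasDerivAt_const_add_mul_const ρ₀' ρr))))).congr_deriv ?_
  simp only [Pi.sub_apply, Pi.mul_apply, Pi.inv_apply, zero_mul, mul_zero, add_zero, zero_add,
    cos_neg, sin_neg, cos_pi_div_two, sin_pi_div_two]
  field_simp
  linear_combination (-(Θ * ρ)) * hss - ρ * ρ₀ * hαΘ

end Linearization

def massOp (c1 : ℝ) (ρ φ : ℝ → ℝ → ℝ → ℝ) (r θ t : ℝ) : ℝ :=
  partialT ρ r θ t + c1 / r * (partialR (fun r θ t => r * ρ r θ t * cos (φ r θ t)) r θ t +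
    partialθ (fun r θ t => ρ r θ t * sin (φ r θ t)) r θ t)

def alignOp (c2 Θ : ℝ) (ρ φ : ℝ → ℝ → ℝ → ℝ) (r θ t : ℝ) : ℝ :=
  partialT φ r θ t +
    c2 * (cos (φ r θ t) * partialR φ r θ t + sin (φ r θ t) / r * partialθ φ r θ t +
      sin (φ r θ t) / r) +
    Θ / ρ r θ t * (cos (φ r θ t) / r * partialθ ρ r θ t - sin (φ r θ t) * partialR ρ r θ t)

section Jets

variable {r θ t ρr ρθ ρt φr φθ φt : ℝ} {ρ φ : ℝ → ℝ → ℝ → ℝ}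

theorem massOp_eq_massResidual (c1 : ℝ) (hρr : HasDerivAt (fun s => ρ s θ t) ρr r)
    (hρθ : HasDerivAt (fun s => ρ r s t) ρθ θ) (hρt : HasDerivAt (fun s => ρ r θ s) ρt t)
    (hφr : HasDerivAt (fun s => φ s θ t) φr r) (hφθ : HasDerivAt (fun s => φ r s t) φθ θ) :
    massOp c1 ρ φ r θ t = massResidual c1 r (ρ r θ t) ρr ρθ ρt (φ r θ t) φr φθ := by
  have hfluxR : HasDerivAt (fun s => s * ρ s θ t * cos (φ s θ t)) _ r :=
    ((hasDerivAt_id' r).mul hρr).mul hφr.cos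
  have hfluxθ : HasDerivAt (fun s => ρ r s t * sin (φ r s t)) _ θ := hρθ.mul hφθ.sin
  simp only [massOp, partialR, partialθ, partialT]
  rw [hρt.deriv, hfluxR.deriv, hfluxθ.deriv, massResidual, Pi.mul_apply]
  ring

theorem alignOp_eq_alignResidual (c2 Θ : ℝ) (hρr : HasDerivAt (fun s => ρ s θ t) ρr r)
    (hρθ : HasDerivAt (fun s => ρ r s t) ρθ θ) (hφr : HasDerivAt (fun s => φ s θ t) φr r)
    (hφθ : HasDerivAt (fun s => φ r s t) φθ θ) (hφt : HasDerivAt (fun s => φ r θ s) φt t) :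
    alignOp c2 Θ ρ φ r θ t = alignResidual c2 Θ r (ρ r θ t) ρr ρθ (φ r θ t) φr φθ φt := by
  simp only [alignOp, partialR, partialθ, partialT]
  rw [hρr.deriv, hρθ.deriv, hφr.deriv, hφθ.deriv, hφt.deriv, alignResidual]

end Jets

def radialPerturb (u : ℝ → ℝ) (f : ℝ → ℝ → ℝ → ℝ) (ε : ℝ) : ℝ → ℝ → ℝ → ℝ :=
  fun r θ t => u r + ε * f r θ t

section Perturbation

variable {c1 c2 Θ α r θ t u' : ℝ} {u : ℝ → ℝ} {ρ φ : ℝ → ℝ → ℝ → ℝ}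
variable (hρ : DifferentiableAt ℝ (fun p : ℝ × ℝ × ℝ => ρ p.1 p.2.1 p.2.2) (r, θ, t))
  (hφ : DifferentiableAt ℝ (fun p : ℝ × ℝ × ℝ => φ p.1 p.2.1 p.2.2) (r, θ, t))
include hρ hφ

theorem massOp_radialPerturb (c1 φ₀ ε : ℝ) (hu : HasDerivAt u u' r) :
    massOp c1 (radialPerturb u ρ ε) (radialPerturb (fun _ => φ₀) φ ε) r θ t =
      massResidual c1 r (u r + ε * ρ r θ t) (u' + ε * partialR ρ r θ t)
        (ε * partialθ ρ r θ t) (ε * partialT ρ r θ t) (φ₀ + ε * φ r θ t)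
        (ε * partialR φ r θ t) (ε * partialθ φ r θ t) :=
  massOp_eq_massResidual c1 (hu.add ((hasDerivAt_partialR hρ).const_mul ε))
    (((hasDerivAt_partialθ hρ).const_mul ε).const_add (u r))
    (((hasDerivAt_partialT hρ).const_mul ε).const_add (u r))
    (((hasDerivAt_partialR hφ).const_mul ε).const_add φ₀)
    (((hasDerivAt_partialθ hφ).const_mul ε).const_add φ₀)

theorem alignOp_radialPerturb (c2 Θ φ₀ ε : ℝ) (hu : HasDerivAt u u' r) :
    alignOp c2 Θ (radialPerturb u ρ ε) (radialPerturb (fun _ => φ₀) φ ε) r θ t =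
      alignResidual c2 Θ r (u r + ε * ρ r θ t) (u' + ε * partialR ρ r θ t)
        (ε * partialθ ρ r θ t) (φ₀ + ε * φ r θ t) (ε * partialR φ r θ t)
        (ε * partialθ φ r θ t) (ε * partialT φ r θ t) :=
  alignOp_eq_alignResidual c2 Θ (hu.add ((hasDerivAt_partialR hρ).const_mul ε))
    (((hasDerivAt_partialθ hρ).const_mul ε).const_add (u r))
    (((hasDerivAt_partialR hφ).const_mul ε).const_add φ₀)
    (((hasDerivAt_partialθ hφ).const_mul ε).const_add φ₀)
    (((hasDerivAt_partialT hφ).const_mul ε).const_add φ₀)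

theorem massOp_radialPerturb_zero (c1 : ℝ) (hu : HasDerivAt u u' r) :
    massOp c1 (radialPerturb u ρ 0) (radialPerturb (fun _ => -(π / 2)) φ 0) r θ t = 0 := by
  rw [massOp_radialPerturb hρ hφ c1 _ 0 hu]
  simp [massResidual]

theorem alignOp_radialPerturb_zero (hr : r ≠ 0) (hu₀ : u r ≠ 0) (hu : HasDerivAt u u' r)
    (hss : r * u' = α * u r) (hαΘ : α * Θ = c2) :
    alignOp c2 Θ (radialPerturb u ρ 0) (radialPerturb (fun _ => -(π / 2)) φ 0) r θ t = 0 := by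
  rw [alignOp_radialPerturb hρ hφ c2 Θ _ 0 hu]
  simp only [alignResidual, zero_mul, add_zero, cos_neg, sin_neg, cos_pi_div_two, sin_pi_div_two]
  field_simp
  linear_combination Θ * hss + u r * hαΘ

theorem hasDerivAt_massOp_radialPerturb (c1 : ℝ) (hr : r ≠ 0) (hu : HasDerivAt u u' r)
    (hss : r * u' = α * u r) :
    HasDerivAt
      (fun ε => massOp c1 (radialPerturb u ρ ε) (radialPerturb (fun _ => -(π / 2)) φ ε) r θ t)
      (partialT ρ r θ t + c1 * u r * partialR φ r θ t - c1 / r * partialθ ρ r θ t +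
        c1 / r * (1 + α) * u r * φ r θ t) 0 := by
  simp only [massOp_radialPerturb hρ hφ c1 _ _ hu]
  exact hasDerivAt_massResidual _ _ _ _ _ _ _ hr hss

theorem hasDerivAt_alignOp_radialPerturb (hr : r ≠ 0) (hu₀ : u r ≠ 0) (hu : HasDerivAt u u' r)
    (hss : r * u' = α * u r) (hαΘ : α * Θ = c2) :
    HasDerivAt
      (fun ε => alignOp c2 Θ (radialPerturb u ρ ε) (radialPerturb (fun _ => -(π / 2)) φ ε) r θ t)
      (partialT φ r θ t + Θ / u r * partialR ρ r θ t - c2 / r * partialθ φ r θ t -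
        c2 / (r * u r) * ρ r θ t) 0 := by
  simp only [alignOp_radialPerturb hρ hφ c2 Θ _ _ hu]
  exact hasDerivAt_alignResidual _ _ _ _ _ _ _ hr hu₀ hss hαΘ

end Perturbation

end

theorem stmt_2_general (c1 c2 Θ α ρstar R1 R2 : ℝ)
    (hΘ : 0 < Θ) (hc2 : c2 ≠ 0) (hα : α = c2 / Θ)
    (hρstar : 0 < ρstar) (hR1 : 0 < R1)
    (ρt φt : ℝ → ℝ → ℝ → ℝ)
    (hρt : ContDiff ℝ 1 (fun p : ℝ × ℝ × ℝ => ρt p.1 p.2.1 p.2.2))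
    (hφt : ContDiff ℝ 1 (fun p : ℝ × ℝ × ℝ => φt p.1 p.2.1 p.2.2)) :
    ∀ r ∈ Set.Ioo R1 R2, ∀ θ t : ℝ,
      let ρs : ℝ → ℝ := fun s => ρstar * s ^ α
      let F1 : ℝ → ℝ := fun ε =>
        deriv (fun s => ρs r + ε * ρt r θ s) t +
          (c1 / r) *
            (deriv (fun s => s * (ρs s + ε * ρt s θ t) * Real.cos (-(π/2) + ε * φt s θ t)) r +
             deriv (fun s => (ρs r + ε * ρt r s t) * Real.sin (-(π/2) + ε * φt r s t)) θ)
      let F2 : ℝ → ℝ := fun ε =>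
        deriv (fun s => -(π/2) + ε * φt r θ s) t +
          c2 * (Real.cos (-(π/2) + ε * φt r θ t) * deriv (fun s => -(π/2) + ε * φt s θ t) r +
                (Real.sin (-(π/2) + ε * φt r θ t) / r) * deriv (fun s => -(π/2) + ε * φt r s t) θ +
                Real.sin (-(π/2) + ε * φt r θ t) / r) +
          (Θ / (ρs r + ε * ρt r θ t)) *
            ((Real.cos (-(π/2) + ε * φt r θ t) / r) * deriv (fun s => ρs r + ε * ρt r s t) θ -
             Real.sin (-(π/2) + ε * φt r θ t) * deriv (fun s => ρs s + ε * ρt s θ t) r)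
      F1 0 = 0 ∧ F2 0 = 0 ∧
      HasDerivAt F1
        (deriv (fun s => ρt r θ s) t + c1 * ρs r * deriv (fun s => φt s θ t) r -
          (c1 / r) * deriv (fun s => ρt r s t) θ + (c1 / r) * (1 + α) * ρs r * φt r θ t) 0 ∧
      HasDerivAt F2
        (deriv (fun s => φt r θ s) t + (c2 / (α * ρs r)) * deriv (fun s => ρt s θ t) r -
          (c2 / r) * deriv (fun s => φt r s t) θ - (c2 / (r * ρs r)) * ρt r θ t) 0 := by
  intro r hr θ t ρs F1 F2
  have hr₀ : 0 < r := hR1.trans hr.1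
  have hρs : HasDerivAt ρs (α * ρs r / r) r := hasDerivAt_const_mul_rpow ρstar α hr₀
  have hρs₀ : ρs r ≠ 0 := (mul_pos hρstar (rpow_pos_of_pos hr₀ α)).ne'
  have hss : r * (α * ρs r / r) = α * ρs r := by field_simp
  have hαΘ : α * Θ = c2 := by rw [hα, div_mul_cancel₀ c2 hΘ.ne']
  have hα₀ : α ≠ 0 := by rw [hα]; exact div_ne_zero hc2 hΘ.ne'
  have hρ := hρt.differentiable one_ne_zero (r, θ, t)
  have hφ := hφt.differentiable one_ne_zero (r, θ, t)
  have hcoef : c2 / (α * ρs r) = Θ / ρs r := by rw [← hαΘ]; field_simp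
  rw [hcoef]
  exact ⟨massOp_radialPerturb_zero hρ hφ c1 hρs,
    alignOp_radialPerturb_zero hρ hφ hr₀.ne' hρs₀ hρs hss hαΘ,
    hasDerivAt_massOp_radialPerturb hρ hφ c1 hr₀.ne' hρs hss,
    hasDerivAt_alignOp_radialPerturb hρ hφ hr₀.ne' hρs₀ hρs hss hαΘ⟩

/-- the operator `L` of the paper is the linearization of the SOH system
in polar coordinates about the perfectly polarized steady state `(ρ_s, −π/2)`,
`ρ_s(r) = ρ* r^α`, `α = c2/Θ`. -/
theorem stmt_2 (c1 c2 Θ α ρstar R1 R2 : ℝ)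
    (hc1 : 0 < c1) (hΘ : 0 < Θ) (hc2 : c2 ≠ 0) (hα : α = c2 / Θ)
    (hρstar : 0 < ρstar) (hR1 : 0 < R1) (hR12 : R1 < R2)
    (ρt φt : ℝ → ℝ → ℝ → ℝ)
    (hρt : ContDiff ℝ 1 (fun p : ℝ × ℝ × ℝ => ρt p.1 p.2.1 p.2.2))
    (hφt : ContDiff ℝ 1 (fun p : ℝ × ℝ × ℝ => φt p.1 p.2.1 p.2.2)) :
    ∀ r ∈ Set.Ioo R1 R2, ∀ θ t : ℝ,
      let ρs : ℝ → ℝ := fun s => ρstar * s ^ α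
      let F1 : ℝ → ℝ := fun ε =>
        deriv (fun s => ρs r + ε * ρt r θ s) t +
          (c1 / r) *
            (deriv (fun s => s * (ρs s + ε * ρt s θ t) * Real.cos (-(π/2) + ε * φt s θ t)) r +
             deriv (fun s => (ρs r + ε * ρt r s t) * Real.sin (-(π/2) + ε * φt r s t)) θ)
      let F2 : ℝ → ℝ := fun ε =>
        deriv (fun s => -(π/2) + ε * φt r θ s) t +
          c2 * (Real.cos (-(π/2) + ε * φt r θ t) * deriv (fun s => -(π/2) + ε * φt s θ t) r +
                (Real.sin (-(π/2) + ε * φt r θ t) / r) * deriv (fun s => -(π/2) + ε * φt r s t) θ +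
                Real.sin (-(π/2) + ε * φt r θ t) / r) +
          (Θ / (ρs r + ε * ρt r θ t)) *
            ((Real.cos (-(π/2) + ε * φt r θ t) / r) * deriv (fun s => ρs r + ε * ρt r s t) θ -
             Real.sin (-(π/2) + ε * φt r θ t) * deriv (fun s => ρs s + ε * ρt s θ t) r)
      F1 0 = 0 ∧ F2 0 = 0 ∧
      HasDerivAt F1
        (deriv (fun s => ρt r θ s) t + c1 * ρs r * deriv (fun s => φt s θ t) r -
          (c1 / r) * deriv (fun s => ρt r s t) θ + (c1 / r) * (1 + α) * ρs r * φt r θ t) 0 ∧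
      HasDerivAt F2
        (deriv (fun s => φt r θ s) t + (c2 / (α * ρs r)) * deriv (fun s => ρt s θ t) r -
          (c2 / r) * deriv (fun s => φt r s t) θ - (c2 / (r * ρs r)) * ρt r θ t) 0 :=
  stmt_2_general c1 c2 Θ α ρstar R1 R2 hΘ hc2 hα hρstar hR1 ρt φt hρt hφt
end

section
/- Let c1 > 0, Θ > 0, c2 ∈ ℝ with c2 ≠ 0, α = c2/Θ, 0 < R1 < R2, n ∈ ℤ and λ ∈ ℂ. Suppose ρ, φ : [R1,R2] → ℂ are continuously differentiable, satisfy the transformed first-order system (T1)–(T2) for all r ∈ [R1,R2], and satisfy the boundary conditions φ(R1) = φ(R2) = 0. If (ρ, φ) is not identically zero on [R1,R2], then Re λ = 0. -/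
open Real Set

/-- The transformed first-order system (T1)–(T2) of the paper with eigenvalue `lam`, for
complex-valued functions `ρ, φ` on `[R1,R2]`. -/
def TransSystem (c1 c2 α R1 R2 : ℝ) (n : ℤ) (lam : ℂ) (ρ φ : ℝ → ℂ) : Prop :=
  ∀ r ∈ Set.Icc R1 R2,
    -- (T1)
    (deriv ρ r + ((α / r ^ (α + 1) : ℝ) : ℂ) *
        (lam / (c2 : ℂ) - Complex.I * (n : ℂ) / (r : ℂ)) * φ r = 0)
    ∧ -- (T2)
    (deriv φ r + (lam / (c1 : ℂ) - Complex.I * (n : ℂ) / (r : ℂ)) *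
        ((r ^ (α + 1) : ℝ) : ℂ) * ρ r = 0)

/-!
Write the system as `ρ' = -a φ`, `φ' = -b ρ`. Then
`(Re (conj ρ · φ))' = -(Re a · |φ|² + Re b · |ρ|²)`, and since `φ` vanishes at both ends the
integral of the right-hand side over `[R1, R2]` is zero. For (T1)–(T2) the terms `-i n / r` are
purely imaginary, so `Re a = Re λ / (Θ r^(α+1))` (as `α / c2 = 1 / Θ`) and
`Re b = Re λ · r^(α+1) / c1`: thus `Re λ` times the integral of a positive weighted energy vanishes.
-/

open Complex ComplexConjugate intervalIntegral

section Energy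

variable {a b ρ φ : ℝ → ℂ} {p q : ℝ → ℝ} {R1 R2 : ℝ}

theorem hasDerivAt_re_conj_mul {r : ℝ} (hρ : HasDerivAt ρ (-(a r * φ r)) r)
    (hφ : HasDerivAt φ (-(b r * ρ r)) r) :
    HasDerivAt (fun x => (conj (ρ x) * φ x).re)
      (-((a r).re * normSq (φ r) + (b r).re * normSq (ρ r))) r := by
  have h : HasDerivAt (fun x => conj (ρ x) * φ x)
      (conj (-(a r * φ r)) * φ r + conj (ρ r) * -(b r * ρ r)) r := hρ.star.mul hφ
  refine (reCLM.hasFDerivAt.comp_hasDerivAt r h).congr_deriv ?_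
  simp only [reCLM_apply, map_neg, map_mul, add_re, mul_re, mul_im, neg_re, neg_im, conj_re,
    conj_im, normSq_apply]
  ring

theorem integral_re_mul_normSq_add_re_mul_normSq_eq_zero (hR : R1 ≤ R2)
    (hρ : ContDiffOn ℝ 1 ρ (Icc R1 R2)) (hφ : ContDiffOn ℝ 1 φ (Icc R1 R2))
    (ha : ContinuousOn a (Icc R1 R2)) (hb : ContinuousOn b (Icc R1 R2))
    (hρ' : ∀ r ∈ Ioo R1 R2, deriv ρ r = -(a r * φ r))
    (hφ' : ∀ r ∈ Ioo R1 R2, deriv φ r = -(b r * ρ r))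
    (hφ₁ : φ R1 = 0) (hφ₂ : φ R2 = 0) :
    ∫ r in R1..R2, ((a r).re * normSq (φ r) + (b r).re * normSq (ρ r)) = 0 := by
  have hdiff : ∀ {f : ℝ → ℂ}, ContDiffOn ℝ 1 f (Icc R1 R2) → ∀ r ∈ Ioo R1 R2,
      HasDerivAt f (deriv f r) r := fun hf r hr =>
    ((hf.differentiableOn one_ne_zero r (Ioo_subset_Icc_self hr)).differentiableAt
      (Icc_mem_nhds hr.1 hr.2)).hasDerivAt
  have hρc := hρ.continuousOn
  have hφc := hφ.continuousOn
  have hcont : ContinuousOn (fun r => (a r).re * normSq (φ r) + (b r).re * normSq (ρ r))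
      (Icc R1 R2) := by fun_prop
  have hftc := integral_eq_sub_of_hasDerivAt_of_le hR (by fun_prop)
    (fun r hr => hasDerivAt_re_conj_mul (hρ' r hr ▸ hdiff hρ r hr) (hφ' r hr ▸ hdiff hφ r hr))
    (hcont.neg.intervalIntegrable_of_Icc hR)
  rw [integral_neg, hφ₁, hφ₂] at hftc
  simpa using hftc

theorem integral_mul_normSq_add_mul_normSq_pos (hR : R1 < R2)
    (hp : ContinuousOn p (Icc R1 R2)) (hq : ContinuousOn q (Icc R1 R2))
    (hp₀ : ∀ r ∈ Icc R1 R2, 0 < p r) (hq₀ : ∀ r ∈ Icc R1 R2, 0 < q r)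
    (hρ : ContinuousOn ρ (Icc R1 R2)) (hφ : ContinuousOn φ (Icc R1 R2))
    (hnz : ¬ ∀ r ∈ Icc R1 R2, ρ r = 0 ∧ φ r = 0) :
    0 < ∫ r in R1..R2, (p r * normSq (φ r) + q r * normSq (ρ r)) := by
  have hnonneg : ∀ r ∈ Icc R1 R2, 0 ≤ p r * normSq (φ r) + q r * normSq (ρ r) := fun r hr =>
    add_nonneg (mul_nonneg (hp₀ r hr).le (normSq_nonneg _))
      (mul_nonneg (hq₀ r hr).le (normSq_nonneg _))
  refine integral_pos hR (by fun_prop) (fun r hr => hnonneg r (Ioc_subset_Icc_self hr)) ?_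
  push Not at hnz
  obtain ⟨r, hr, hρφ⟩ := hnz
  refine ⟨r, hr, (hnonneg r hr).lt_of_ne' ?_⟩
  by_cases hρr : ρ r = 0
  · exact (add_pos_of_pos_of_nonneg (mul_pos (hp₀ r hr) (normSq_pos.2 (hρφ hρr)))
      (mul_nonneg (hq₀ r hr).le (normSq_nonneg _))).ne'
  · exact (add_pos_of_nonneg_of_pos (mul_nonneg (hp₀ r hr).le (normSq_nonneg _))
      (mul_pos (hq₀ r hr) (normSq_pos.2 hρr))).ne'

end Energy

section Coefficients

variable {w : ℝ → ℝ} {s : Set ℝ}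

theorem re_ofReal_mul_sub_I_mul_div (x : ℝ) (z : ℂ) (n : ℤ) (r : ℝ) :
    ((x : ℂ) * (z - I * n / r)).re = x * z.re := by
  simp

theorem ContinuousOn.ofReal_mul_sub_I_mul_div (hw : ContinuousOn w s) (hs : ∀ r ∈ s, r ≠ 0)
    (z : ℂ) (n : ℤ) : ContinuousOn (fun r : ℝ => (w r : ℂ) * (z - I * n / r)) s :=
  (continuous_ofReal.comp_continuousOn hw).mul <| continuousOn_const.sub <|
    continuousOn_const.div continuous_ofReal.continuousOn fun r hr => ofReal_ne_zero.2 (hs r hr)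

end Coefficients

/-- Lemma 2 of the paper: any nontrivial solution of the transformed
system (T1)–(T2) with `φ(R1) = φ(R2) = 0` forces the eigenvalue to be pure imaginary. -/
theorem stmt_5 (c1 c2 Θ α R1 R2 : ℝ) (n : ℤ) (lam : ℂ)
    (hc1 : 0 < c1) (hΘ : 0 < Θ) (hc2 : c2 ≠ 0) (hα : α = c2 / Θ)
    (hR1 : 0 < R1) (hR12 : R1 < R2)
    (ρ φ : ℝ → ℂ)
    (hρ : ContDiffOn ℝ 1 ρ (Set.Icc R1 R2)) (hφ : ContDiffOn ℝ 1 φ (Set.Icc R1 R2))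
    (hsys : TransSystem c1 c2 α R1 R2 n lam ρ φ)
    (hbc1 : φ R1 = 0) (hbc2 : φ R2 = 0)
    (hnz : ¬ ∀ r ∈ Set.Icc R1 R2, ρ r = 0 ∧ φ r = 0) :
    lam.re = 0 := by
  have hr₀ : ∀ r ∈ Icc R1 R2, r ≠ 0 := fun r hr => (hR1.trans_le hr.1).ne'
  have hpow₀ : ∀ r ∈ Icc R1 R2, 0 < r ^ (α + 1) := fun r hr =>
    rpow_pos_of_pos (hR1.trans_le hr.1) _
  have hpow : ContinuousOn (fun r : ℝ => r ^ (α + 1)) (Icc R1 R2) :=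
    continuousOn_id.rpow_const fun r hr => Or.inl (hr₀ r hr)
  have hw : ContinuousOn (fun r : ℝ => α / r ^ (α + 1)) (Icc R1 R2) :=
    continuousOn_const.div hpow fun r hr => (hpow₀ r hr).ne'
  have henergy := integral_re_mul_normSq_add_re_mul_normSq_eq_zero hR12.le hρ hφ
    (hw.ofReal_mul_sub_I_mul_div hr₀ (lam / c2) n)
    (hpow.ofReal_mul_sub_I_mul_div hr₀ (lam / c1) n)
    (fun r hr => by linear_combination (hsys r (Ioo_subset_Icc_self hr)).1)
    (fun r hr => by linear_combination (hsys r (Ioo_subset_Icc_self hr)).2) hbc1 hbc2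
  have hre_a (r : ℝ) : α / r ^ (α + 1) * (lam / c2).re = lam.re * (Θ * r ^ (α + 1))⁻¹ := by
    rw [div_ofReal_re, hα]
    field_simp
  have hre_b (r : ℝ) : r ^ (α + 1) * (lam / c1).re = lam.re * (r ^ (α + 1) / c1) := by
    rw [div_ofReal_re]
    ring
  simp only [re_ofReal_mul_sub_I_mul_div, hre_a, hre_b, mul_assoc, ← mul_add,
    integral_const_mul] at henergy
  have hp : ContinuousOn (fun r : ℝ => (Θ * r ^ (α + 1))⁻¹) (Icc R1 R2) :=
    (continuousOn_const.mul hpow).inv₀ fun r hr => (mul_pos hΘ (hpow₀ r hr)).ne'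
  refine (mul_eq_zero.1 henergy).resolve_right (integral_mul_normSq_add_mul_normSq_pos hR12 hp
    (hpow.div_const c1) (fun r hr => inv_pos.2 (mul_pos hΘ (hpow₀ r hr)))
    (fun r hr => div_pos (hpow₀ r hr) hc1) hρ.continuousOn hφ.continuousOn hnz).ne'
end

section
/- Let c1 > 0, Θ > 0, c2 ∈ ℝ with c2 ≠ 0, α = c2/Θ, 0 < R1 < R2, n ∈ ℤ and λ ∈ ℂ with Re λ ≠ 0. Suppose ρ, φ : [R1,R2] → ℂ are continuously differentiable and satisfy the transformed first-order system (T1)–(T2) for all r ∈ [R1,R2]. Then the function g(r) = φ'(r) / (r^{α+1}(λ/c1 − i n/r)) is differentiable on (R1,R2) and for all r ∈ (R1,R2): g'(r) − (1/r^{α+1})(λ/Θ − i n α / r) φ(r) = 0. -/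
open Real Set

open Complex in
theorem div_ofReal_sub_I_mul_div_ofReal_ne_zero {lam : ℂ} (hre : lam.re ≠ 0) {c : ℝ}
    (hc : c ≠ 0) (m s : ℝ) : lam / c - I * m / s ≠ 0 := by
  intro h
  have hre0 : (lam / c - I * m / s).re = lam.re / c := by
    simp [div_ofReal_re]
  rw [h, zero_re] at hre0
  exact div_ne_zero hre hc hre0.symm

namespace TransSystem

variable {c1 c2 α R1 R2 : ℝ} {n : ℤ} {lam : ℂ} {ρ φ : ℝ → ℂ}

theorem deriv_div_eqOn_neg (hsys : TransSystem c1 c2 α R1 R2 n lam ρ φ) (hc1 : c1 ≠ 0)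
    (hre : lam.re ≠ 0) (hR1 : 0 < R1) :
    EqOn (fun r : ℝ => deriv φ r /
      (((r ^ (α + 1) : ℝ) : ℂ) * (lam / (c1 : ℂ) - Complex.I * (n : ℂ) / (r : ℂ)))) (-ρ)
      (Icc R1 R2) := by
  intro r hr
  have hpow : ((r ^ (α + 1) : ℝ) : ℂ) ≠ 0 :=
    Complex.ofReal_ne_zero.2 (rpow_pos_of_pos (hR1.trans_le hr.1) _).ne'
  have hfac : lam / (c1 : ℂ) - Complex.I * (n : ℂ) / (r : ℂ) ≠ 0 := by
    exact_mod_cast div_ofReal_sub_I_mul_div_ofReal_ne_zero hre hc1 n r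
  have hT2 := (hsys r hr).2
  simp only [Pi.neg_apply]
  field_simp
  linear_combination hT2

end TransSystem

theorem stmt_6_general (c1 c2 Θ α R1 R2 : ℝ) (n : ℤ) (lam : ℂ)
    (hc1 : 0 < c1) (hc2 : c2 ≠ 0) (hα : α = c2 / Θ)
    (hR1 : 0 < R1) (hre : lam.re ≠ 0)
    (ρ φ : ℝ → ℂ)
    (hρ : ContDiffOn ℝ 1 ρ (Set.Icc R1 R2))
    (hsys : TransSystem c1 c2 α R1 R2 n lam ρ φ)
    (g : ℝ → ℂ)
    (hg : ∀ r : ℝ, g r = deriv φ r /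
      (((r ^ (α + 1) : ℝ) : ℂ) * (lam / (c1 : ℂ) - Complex.I * (n : ℂ) / (r : ℂ)))) :
    ∀ r ∈ Set.Ioo R1 R2,
      DifferentiableAt ℝ g r ∧
      deriv g r - ((1 / r ^ (α + 1) : ℝ) : ℂ) *
        (lam / (Θ : ℂ) - Complex.I * (n : ℂ) * (α : ℂ) / (r : ℂ)) * φ r = 0 := by
  intro r hr
  have hnhds : Icc R1 R2 ∈ nhds r := Icc_mem_nhds hr.1 hr.2
  have hgρ : g =ᶠ[nhds r] -ρ := by
    filter_upwards [hnhds] with s hs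
    rw [hg s]
    exact hsys.deriv_div_eqOn_neg hc1.ne' hre hR1 hs
  have hρr : DifferentiableAt ℝ ρ r := (hρ.differentiableOn one_ne_zero).differentiableAt hnhds
  refine ⟨hρr.neg.congr_of_eventuallyEq hgρ, ?_⟩
  have hT1 := (hsys r (Ioo_subset_Icc_self hr)).1
  have hcoef : ((α / r ^ (α + 1) : ℝ) : ℂ) * (lam / (c2 : ℂ) - Complex.I * (n : ℂ) / (r : ℂ)) =
      ((1 / r ^ (α + 1) : ℝ) : ℂ) * (lam / (Θ : ℂ) - Complex.I * (n : ℂ) * (α : ℂ) / (r : ℂ)) := by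
    have hc2' : (c2 : ℂ) ≠ 0 := Complex.ofReal_ne_zero.2 hc2
    subst hα
    push_cast
    field_simp
  rw [hgρ.deriv_eq, deriv.neg]
  linear_combination -hT1 + hcoef * φ r

/-- second-order reduction (equation (2.16) of the paper). If `Re λ ≠ 0`
and `(ρ,φ)` solves (T1)–(T2), then `g(r) = φ'(r)/(r^{α+1}(λ/c1 − in/r))` is differentiable
on `(R1,R2)` and satisfies `g' − r^{−(α+1)}(λ/Θ − inα/r) φ = 0` there. -/
theorem stmt_6 (c1 c2 Θ α R1 R2 : ℝ) (n : ℤ) (lam : ℂ)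
    (hc1 : 0 < c1) (hΘ : 0 < Θ) (hc2 : c2 ≠ 0) (hα : α = c2 / Θ)
    (hR1 : 0 < R1) (hR12 : R1 < R2) (hre : lam.re ≠ 0)
    (ρ φ : ℝ → ℂ)
    (hρ : ContDiffOn ℝ 1 ρ (Set.Icc R1 R2)) (hφ : ContDiffOn ℝ 1 φ (Set.Icc R1 R2))
    (hsys : TransSystem c1 c2 α R1 R2 n lam ρ φ)
    (g : ℝ → ℂ)
    (hg : ∀ r : ℝ, g r = deriv φ r /
      (((r ^ (α + 1) : ℝ) : ℂ) * (lam / (c1 : ℂ) - Complex.I * (n : ℂ) / (r : ℂ)))) :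
    ∀ r ∈ Set.Ioo R1 R2,
      DifferentiableAt ℝ g r ∧
      deriv g r - ((1 / r ^ (α + 1) : ℝ) : ℂ) *
        (lam / (Θ : ℂ) - Complex.I * (n : ℂ) * (α : ℂ) / (r : ℂ)) * φ r = 0 :=
  stmt_6_general c1 c2 Θ α R1 R2 n lam hc1 hc2 hα hR1 hre ρ φ hρ hsys g hg
end

section
/- Let c1 > 0, Θ > 0, c2 ∈ ℝ with c2 ≠ 0, α = c2/Θ, 0 < R1 < R2, n ∈ ℤ, and λ = μ + iν with μ, ν ∈ ℝ and μ ≠ 0. Suppose φ : [R1,R2] → ℂ is continuously differentiable with φ(R1) = φ(R2) = 0, the function g(r) = φ'(r)/(r^{α+1}(λ/c1 − i n/r)) is continuously differentiable on [R1,R2], and g'(r) − (1/r^{α+1})(λ/Θ − i n α/r) φ(r) = 0 on [R1,R2]. Then ∫_{R1}^{R2} (μ/c1) |φ'(r)|² / (r^{α+1}((μ/c1)² + (ν/c1 − n/r)²)) dr + ∫_{R1}^{R2} (μ/Θ) r^{−(α+1)} |φ(r)|² dr = 0, and consequently φ(r) = 0 for all r ∈ [R1,R2]. -/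
/-!
Write `φ' = r^(α+1) D g` and `g' = r^(-(α+1)) E φ`, where `Re D = μ/c1`, `Re E = μ/Θ`.
Since `φ` vanishes at both ends, `∫ Re (g' φ̄ + g φ̄') = [Re (g φ̄)] = 0`, and the two real
parts are exactly the two integrands of the identity. Both have the sign of `μ ≠ 0`, so both
integrals vanish, and the continuous nonnegative density `r^(-(α+1)) |φ|²` vanishes identically.
-/

open Real Set Complex MeasureTheory ComplexConjugate

theorem integral_eq_zero_of_hasDerivAt_re_mul_conj {a b : ℝ} (hab : a ≤ b)
    {f g f' g' : ℝ → ℂ} {h : ℝ → ℝ}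
    (hf : ContinuousOn f (Icc a b)) (hg : ContinuousOn g (Icc a b))
    (hfa : f a = 0) (hfb : f b = 0)
    (hf' : ∀ x ∈ Ioo a b, HasDerivAt f (f' x) x) (hg' : ∀ x ∈ Ioo a b, HasDerivAt g (g' x) x)
    (hh : ∀ x ∈ Ioo a b, h x = (g' x * conj (f x) + g x * conj (f' x)).re)
    (hint : IntervalIntegrable h volume a b) : ∫ x in a..b, h x = 0 := by
  have hF : ∀ x ∈ Ioo a b, HasDerivAt (fun x => (g x * conj (f x)).re) (h x) x := by
    intro x hx
    rw [hh x hx]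
    exact reCLM.hasFDerivAt.comp_hasDerivAt x ((hg' x hx).mul (hf' x hx).star)
  have hFcont : ContinuousOn (fun x => (g x * conj (f x)).re) (Icc a b) :=
    continuous_re.comp_continuousOn (hg.mul hf.star)
  simpa [hfa, hfb] using intervalIntegral.integral_eq_sub_of_hasDerivAt_of_le hab hFcont hF hint

theorem ContinuousOn.eqOn_zero_of_integral_eq_zero {a b : ℝ} (hab : a < b) {f : ℝ → ℝ}
    (hf : ContinuousOn f (Icc a b)) (hf0 : ∀ x ∈ Icc a b, 0 ≤ f x)
    (hint : ∫ x in a..b, f x = 0) : EqOn f 0 (Icc a b) := by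
  have hae : f =ᵐ[volume.restrict (Ioc a b)] 0 :=
    (intervalIntegral.integral_eq_zero_iff_of_le_of_nonneg_ae hab.le
      ((ae_restrict_mem measurableSet_Ioc).mono fun x hx => hf0 x (Ioc_subset_Icc_self hx))
      (hf.intervalIntegrable_of_Icc hab.le)).1 hint
  rw [Measure.restrict_congr_set Ioc_ae_eq_Icc] at hae
  exact Measure.eqOn_Icc_of_ae_eq volume hab.ne hae hf continuousOn_const

theorem eqOn_zero_of_integral_add_integral_eq_zero {a b c : ℝ} (hab : a < b) (hc : c ≠ 0)
    {u v : ℝ → ℝ} (hv : ContinuousOn v (Icc a b))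
    (hu0 : ∀ x ∈ Icc a b, 0 ≤ c * u x) (hv0 : ∀ x ∈ Icc a b, 0 ≤ c * v x)
    (h : (∫ x in a..b, u x) + ∫ x in a..b, v x = 0) : EqOn v 0 (Icc a b) := by
  have hU : 0 ≤ ∫ x in a..b, c * u x := intervalIntegral.integral_nonneg hab.le hu0
  have hV : 0 ≤ ∫ x in a..b, c * v x := intervalIntegral.integral_nonneg hab.le hv0
  have hsum : (∫ x in a..b, c * u x) + ∫ x in a..b, c * v x = 0 := by
    rw [intervalIntegral.integral_const_mul, intervalIntegral.integral_const_mul, ← mul_add, h,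
      mul_zero]
  have hcv : ∫ x in a..b, c * v x = 0 := by linarith
  intro x hx
  simpa [hc] using ContinuousOn.eqOn_zero_of_integral_eq_zero (f := fun x => c * v x) hab
    (continuousOn_const.mul hv) hv0 hcv hx

theorem re_mul_conj_mul_ofReal_mul_add_mul_I (w : ℂ) (ρ a b : ℝ) :
    (w * conj (w * (ρ * (a + b * I)))).re = a * ρ * ‖w‖ ^ 2 := by
  simp only [map_mul, conj_ofReal, map_add, conj_I, mul_neg, mul_re, conj_re, ofReal_re, add_re,
    neg_re, I_re, mul_zero, ofReal_im, I_im, mul_one, sub_self, neg_zero, add_zero, add_im, neg_im,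
    mul_im, zero_add, zero_mul, sub_zero, conj_im, neg_mul, neg_neg, Complex.sq_norm, normSq_apply]
  ring

theorem re_ofReal_mul_add_mul_I_mul_mul_conj (ρ a b : ℝ) (z : ℂ) :
    ((ρ : ℂ) * (a + b * I) * z * conj z).re = a * ρ * ‖z‖ ^ 2 := by
  simp only [mul_re, ofReal_re, add_re, I_re, mul_zero, ofReal_im, I_im, mul_one, sub_self,
    add_zero, add_im, mul_im, zero_add, zero_mul, sub_zero, conj_re, conj_im, mul_neg,
    sub_neg_eq_add, Complex.sq_norm, normSq_apply]
  ring

theorem mul_norm_mul_ofReal_mul_add_mul_I_sq_div (w : ℂ) {ρ a : ℝ} (b : ℝ) (hρ : ρ ≠ 0)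
    (ha : a ≠ 0) :
    a * ‖w * (ρ * (a + b * I))‖ ^ 2 / (ρ * (a ^ 2 + b ^ 2)) = a * ρ * ‖w‖ ^ 2 := by
  have hab : 0 < a ^ 2 + b ^ 2 := by positivity
  simp only [norm_mul, Complex.norm_real, Complex.norm_add_mul_I, Real.norm_eq_abs, mul_pow,
    sq_abs, Real.sq_sqrt hab.le]
  field_simp

theorem ContDiffOn.hasDerivAt_deriv_of_mem_Ioo {f : ℝ → ℂ} {a b x : ℝ}
    (hf : ContDiffOn ℝ 1 f (Icc a b)) (hx : x ∈ Ioo a b) : HasDerivAt f (deriv f x) x :=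
  ((hf.differentiableOn one_ne_zero x (Ioo_subset_Icc_self hx)).differentiableAt
    (Icc_mem_nhds hx.1 hx.2)).hasDerivAt

section FirstOrderSystem

variable {a b A B : ℝ} {φ g : ℝ → ℂ} {ρ σ p q : ℝ → ℝ}

theorem integral_energy_eq_zero (hab : a ≤ b) (hA : A ≠ 0)
    (hφ : ContDiffOn ℝ 1 φ (Icc a b)) (hg : ContDiffOn ℝ 1 g (Icc a b))
    (hφa : φ a = 0) (hφb : φ b = 0) (hρ : ContinuousOn ρ (Icc a b))
    (hρ0 : ∀ r ∈ Icc a b, ρ r ≠ 0) (hσ : ContinuousOn σ (Icc a b))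
    (hφ' : ∀ r ∈ Icc a b, deriv φ r = g r * (ρ r * (A + p r * I)))
    (hg' : ∀ r ∈ Ioo a b, deriv g r = σ r * (B + q r * I) * φ r) :
    (∫ r in a..b, A * ‖deriv φ r‖ ^ 2 / (ρ r * (A ^ 2 + p r ^ 2)))
      + ∫ r in a..b, B * σ r * ‖φ r‖ ^ 2 = 0 := by
  have hu : ∀ r ∈ Icc a b,
      A * ‖deriv φ r‖ ^ 2 / (ρ r * (A ^ 2 + p r ^ 2)) = A * ρ r * ‖g r‖ ^ 2 := fun r hr => by
    rw [hφ' r hr]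
    exact mul_norm_mul_ofReal_mul_add_mul_I_sq_div _ _ (hρ0 r hr) hA
  have hu_cont : ContinuousOn (fun r => A * ‖deriv φ r‖ ^ 2 / (ρ r * (A ^ 2 + p r ^ 2)))
      (Icc a b) :=
    ((continuousOn_const.mul hρ).mul (hg.continuousOn.norm.pow 2)).congr hu
  have hv_cont : ContinuousOn (fun r => B * σ r * ‖φ r‖ ^ 2) (Icc a b) :=
    (continuousOn_const.mul hσ).mul (hφ.continuousOn.norm.pow 2)
  rw [← intervalIntegral.integral_add (hu_cont.intervalIntegrable_of_Icc hab)
    (hv_cont.intervalIntegrable_of_Icc hab)]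
  refine integral_eq_zero_of_hasDerivAt_re_mul_conj hab hφ.continuousOn hg.continuousOn hφa hφb
    (fun r => hφ.hasDerivAt_deriv_of_mem_Ioo) (fun r => hg.hasDerivAt_deriv_of_mem_Ioo)
    (fun r hr => ?_) ((hu_cont.add hv_cont).intervalIntegrable_of_Icc hab)
  have hr' := Ioo_subset_Icc_self hr
  rw [hu r hr', add_re, hg' r hr, hφ' r hr', re_ofReal_mul_add_mul_I_mul_mul_conj,
    re_mul_conj_mul_ofReal_mul_add_mul_I]
  ring

theorem eqOn_zero_of_integral_energy_eq_zero {ψ : ℝ → ℂ} (hab : a < b) (hAB : 0 < A * B)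
    (hρ0 : ∀ r ∈ Icc a b, 0 ≤ ρ r) (hσ : ContinuousOn σ (Icc a b))
    (hσ0 : ∀ r ∈ Icc a b, 0 < σ r) (hφ : ContinuousOn φ (Icc a b))
    (h : (∫ r in a..b, A * ‖ψ r‖ ^ 2 / (ρ r * (A ^ 2 + p r ^ 2)))
      + ∫ r in a..b, B * σ r * ‖φ r‖ ^ 2 = 0) :
    EqOn φ 0 (Icc a b) := by
  have hB : B ≠ 0 := by rintro rfl; simp at hAB
  intro r hr
  have hu0 : ∀ r ∈ Icc a b, 0 ≤ B * (A * ‖ψ r‖ ^ 2 / (ρ r * (A ^ 2 + p r ^ 2))) := by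
    intro r hr
    have := hρ0 r hr
    rw [mul_div_assoc, ← mul_assoc, mul_comm B]
    positivity
  have hv0 : ∀ r ∈ Icc a b, 0 ≤ B * (B * σ r * ‖φ r‖ ^ 2) := by
    intro r hr
    have := hσ0 r hr
    rw [← mul_assoc, ← mul_assoc, ← sq]
    positivity
  have hv := eqOn_zero_of_integral_add_integral_eq_zero hab hB
    ((continuousOn_const.mul hσ).mul (hφ.norm.pow 2)) hu0 hv0 h hr
  simpa [hB, (hσ0 r hr).ne'] using hv

end FirstOrderSystem

theorem stmt_7_general (c1 Θ α R1 R2 : ℝ) (n : ℤ) (mu nu : ℝ) (lam : ℂ)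
    (hc1 : 0 < c1) (hΘ : 0 < Θ)
    (hR1 : 0 < R1) (hR12 : R1 < R2)
    (hlam : lam = (mu : ℂ) + (nu : ℂ) * Complex.I) (hmu : mu ≠ 0)
    (φ : ℝ → ℂ) (hφ : ContDiffOn ℝ 1 φ (Set.Icc R1 R2))
    (hbc1 : φ R1 = 0) (hbc2 : φ R2 = 0)
    (g : ℝ → ℂ)
    (hg : ∀ r : ℝ, g r = deriv φ r /
      (((r ^ (α + 1) : ℝ) : ℂ) * (lam / (c1 : ℂ) - Complex.I * (n : ℂ) / (r : ℂ))))
    (hgC1 : ContDiffOn ℝ 1 g (Set.Icc R1 R2))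
    (heq : ∀ r ∈ Set.Icc R1 R2,
      deriv g r - ((1 / r ^ (α + 1) : ℝ) : ℂ) *
        (lam / (Θ : ℂ) - Complex.I * (n : ℂ) * (α : ℂ) / (r : ℂ)) * φ r = 0) :
    ((∫ r in R1..R2, (mu / c1) * ‖deriv φ r‖ ^ 2 /
        (r ^ (α + 1) * ((mu / c1) ^ 2 + (nu / c1 - (n : ℝ) / r) ^ 2)))
      + ∫ r in R1..R2, (mu / Θ) * r ^ (-(α + 1)) * ‖φ r‖ ^ 2 = 0)
    ∧ ∀ r ∈ Set.Icc R1 R2, φ r = 0 := by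
  have hpos : ∀ r ∈ Icc R1 R2, 0 < r := fun r hr => hR1.trans_le hr.1
  have hrpow : ∀ β : ℝ, ContinuousOn (fun r : ℝ => r ^ β) (Icc R1 R2) := fun β =>
    continuousOn_id.rpow_const fun r hr => Or.inl (hpos r hr).ne'
  have hφ' : ∀ r ∈ Icc R1 R2, deriv φ r =
      g r * ((r ^ (α + 1) : ℝ) * ((mu / c1 : ℝ) + ((nu / c1 - n / r : ℝ) : ℂ) * I)) := by
    intro r hr
    have hD : lam / c1 - I * n / r = ((mu / c1 : ℝ) : ℂ) + ((nu / c1 - n / r : ℝ) : ℂ) * I := by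
      rw [hlam]; push_cast; ring
    rw [hg r, hD, div_mul_cancel₀]
    refine mul_ne_zero (ofReal_ne_zero.2 (rpow_pos_of_pos (hpos r hr) _).ne') fun h => ?_
    simpa [hmu, hc1.ne'] using congrArg re h
  have hg' : ∀ r ∈ Ioo R1 R2, deriv g r =
      (r ^ (-(α + 1)) : ℝ) * ((mu / Θ : ℝ) + ((nu / Θ - n * α / r : ℝ) : ℂ) * I) * φ r := by
    intro r hr
    have hr' := Ioo_subset_Icc_self hr
    rw [sub_eq_zero.1 (heq r hr'), hlam, rpow_neg (hpos r hr').le]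
    push_cast
    ring
  have henergy := integral_energy_eq_zero hR12.le (div_ne_zero hmu hc1.ne') hφ hgC1 hbc1 hbc2
    (hrpow _) (fun r hr => (rpow_pos_of_pos (hpos r hr) _).ne') (hrpow _) hφ' hg'
  refine ⟨henergy, eqOn_zero_of_integral_energy_eq_zero hR12 ?_
    (fun r hr => (rpow_pos_of_pos (hpos r hr) _).le) (hrpow _)
    (fun r hr => rpow_pos_of_pos (hpos r hr) _) hφ.continuousOn henergy⟩
  rw [div_mul_div_comm, ← sq]
  positivity

/-- the energy identity from the proof of Lemma 2 of the paper, and the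
resulting vanishing of `φ` when `Re λ = μ ≠ 0`. -/
theorem stmt_7 (c1 c2 Θ α R1 R2 : ℝ) (n : ℤ) (mu nu : ℝ) (lam : ℂ)
    (hc1 : 0 < c1) (hΘ : 0 < Θ) (hc2 : c2 ≠ 0) (hα : α = c2 / Θ)
    (hR1 : 0 < R1) (hR12 : R1 < R2)
    (hlam : lam = (mu : ℂ) + (nu : ℂ) * Complex.I) (hmu : mu ≠ 0)
    (φ : ℝ → ℂ) (hφ : ContDiffOn ℝ 1 φ (Set.Icc R1 R2))
    (hbc1 : φ R1 = 0) (hbc2 : φ R2 = 0)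
    (g : ℝ → ℂ)
    (hg : ∀ r : ℝ, g r = deriv φ r /
      (((r ^ (α + 1) : ℝ) : ℂ) * (lam / (c1 : ℂ) - Complex.I * (n : ℂ) / (r : ℂ))))
    (hgC1 : ContDiffOn ℝ 1 g (Set.Icc R1 R2))
    (heq : ∀ r ∈ Set.Icc R1 R2,
      deriv g r - ((1 / r ^ (α + 1) : ℝ) : ℂ) *
        (lam / (Θ : ℂ) - Complex.I * (n : ℂ) * (α : ℂ) / (r : ℂ)) * φ r = 0) :
    ((∫ r in R1..R2, (mu / c1) * ‖deriv φ r‖ ^ 2 /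
        (r ^ (α + 1) * ((mu / c1) ^ 2 + (nu / c1 - (n : ℝ) / r) ^ 2)))
      + ∫ r in R1..R2, (mu / Θ) * r ^ (-(α + 1)) * ‖φ r‖ ^ 2 = 0)
    ∧ ∀ r ∈ Set.Icc R1 R2, φ r = 0 :=
  stmt_7_general c1 Θ α R1 R2 n mu nu lam hc1 hΘ hR1 hR12 hlam hmu φ hφ hbc1 hbc2 g hg hgC1 heq
end

section
/- Let c1 > 0, Θ > 0, c2 ∈ ℝ with c2 ≠ 0, α = c2/Θ, ρ* > 0, ρ_s(r) = ρ* r^α, and 0 < R1 < R2. Suppose ρ̂, φ̂ : [R1,R2] → ℂ are continuously differentiable, satisfy the eigen-system (E1)–(E2) with n = 0 and λ = 0, i.e. c1 ρ_s(r) φ̂'(r) + (1+α)(c1/r) ρ_s(r) φ̂(r) = 0 and (c2/(α ρ_s(r))) ρ̂'(r) − (c2/(r ρ_s(r))) ρ̂(r) = 0 for all r ∈ [R1,R2], together with φ̂(R1) = 0 and ∫_{R1}^{R2} ρ̂(r) r dr = 0. Then ρ̂(r) = 0 and φ̂(r) = 0 for all r ∈ [R1,R2]. -/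
open Real Set

/-!
Both equations are Euler equations `f' = (β / r) f` on `[R1, R2] ⊆ (0, ∞)`, so `r ^ (-β) f` has
zero derivative and `f r = (r / R1) ^ β f R1`. For `φ̂` (with `β = -(1 + α)`) the boundary value
`φ̂ R1 = 0` kills the solution; for `ρ̂` (with `β = α`) the mass integral is `ρ̂ R1` times the
positive number `∫ (r / R1) ^ α r dr`, so `ρ̂ R1 = 0`.
-/

section EulerEquation

variable {E : Type*} [NormedAddCommGroup E] [NormedSpace ℝ E] {f : ℝ → E} {a b : ℝ}

lemma eq_left_of_hasDerivAt_zero [CompleteSpace E] (hf : ContinuousOn f (Icc a b))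
    (hf' : ∀ x ∈ Ioo a b, HasDerivAt f 0 x) : ∀ x ∈ Icc a b, f x = f a := by
  intro x hx
  have hFTC := intervalIntegral.integral_eq_sub_of_hasDerivAt_of_le hx.1
    (hf.mono (Icc_subset_Icc_right hx.2)) (fun y hy => hf' y ⟨hy.1, hy.2.trans_le hx.2⟩)
    intervalIntegrable_const
  rw [intervalIntegral.integral_zero] at hFTC
  exact (sub_eq_zero.mp hFTC.symm)

lemma eq_div_rpow_smul_of_hasDerivAt [CompleteSpace E] {β : ℝ} (ha : 0 < a)
    (hf : ContinuousOn f (Icc a b)) (hf' : ∀ x ∈ Ioo a b, HasDerivAt f ((β / x) • f x) x) :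
    ∀ x ∈ Icc a b, f x = (x / a) ^ β • f a := by
  have hpos : ∀ x ∈ Icc a b, 0 < x := fun x hx => ha.trans_le hx.1
  set g : ℝ → E := fun x => x ^ (-β) • f x
  have hg : ContinuousOn g (Icc a b) :=
    (continuousOn_id.rpow_const fun x hx => Or.inl (hpos x hx).ne').smul hf
  have hg' : ∀ x ∈ Ioo a b, HasDerivAt g 0 x := by
    intro x hx
    have hx0 : 0 < x := hpos x (Ioo_subset_Icc_self hx)
    refine ((hasDerivAt_rpow_const (p := -β) (Or.inl hx0.ne')).smul (hf' x hx)).congr_deriv ?_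
    rw [smul_smul, ← add_smul, rpow_sub_one hx0.ne']
    field_simp
    simp
  intro x hx
  have hgx := eq_left_of_hasDerivAt_zero hg hg' x hx
  calc f x = x ^ β • g x := by
        simp only [g, smul_smul, ← rpow_add (hpos x hx), add_neg_cancel, rpow_zero, one_smul]
    _ = (x / a) ^ β • f a := by
        rw [hgx, smul_smul, div_rpow (hpos x hx).le ha.le, rpow_neg ha.le, div_eq_mul_inv]

end EulerEquation

lemma hasDerivAt_smul_of_mul_deriv_eq {f : ℝ → ℂ} {x c d k : ℝ} (hf : DifferentiableAt ℝ f x)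
    (hc : c ≠ 0) (hk : c * k = d) (h : (c : ℂ) * deriv f x = d * f x) :
    HasDerivAt f (k • f x) x := by
  have hderiv : deriv f x = k • f x := by
    refine mul_left_cancel₀ (Complex.ofReal_ne_zero.mpr hc) ?_
    rw [h, ← hk, Complex.real_smul, Complex.ofReal_mul, mul_assoc]
  exact hderiv ▸ hf.hasDerivAt

lemma integral_div_rpow_mul_self_pos {a b β : ℝ} (ha : 0 < a) (hab : a < b) :
    0 < ∫ r in a..b, (r / a) ^ β * r := by
  refine intervalIntegral.intervalIntegral_pos_of_pos_on ?_ ?_ hab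
  · refine ContinuousOn.intervalIntegrable ?_
    rw [uIcc_of_le hab.le]
    exact ((continuousOn_id.div_const a).rpow_const fun r hr =>
      Or.inl (div_pos (ha.trans_le hr.1) ha).ne').mul continuousOn_id
  · intro r hr
    have hr0 : 0 < r := ha.trans hr.1
    positivity

/-- `0` is not an eigenvalue of `L_0`: any solution of the `n = 0`,
`λ = 0` eigen-system with `φ̂(R1) = 0` and zero total mass `∫ ρ̂ r dr = 0` vanishes
identically. -/
theorem stmt_10 (c1 c2 Θ α ρstar R1 R2 : ℝ)
    (hc1 : 0 < c1) (hΘ : 0 < Θ) (hc2 : c2 ≠ 0) (hα : α = c2 / Θ)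
    (hρstar : 0 < ρstar) (hR1 : 0 < R1) (hR12 : R1 < R2)
    (ρh φh : ℝ → ℂ)
    (hρh : ContDiffOn ℝ 1 ρh (Set.Icc R1 R2)) (hφh : ContDiffOn ℝ 1 φh (Set.Icc R1 R2))
    (heq1 : ∀ r ∈ Set.Icc R1 R2,
      ((c1 * (ρstar * r ^ α) : ℝ) : ℂ) * deriv φh r
        + (((1 + α) * (c1 / r) * (ρstar * r ^ α) : ℝ) : ℂ) * φh r = 0)
    (heq2 : ∀ r ∈ Set.Icc R1 R2,
      ((c2 / (α * (ρstar * r ^ α)) : ℝ) : ℂ) * deriv ρh r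
        - ((c2 / (r * (ρstar * r ^ α)) : ℝ) : ℂ) * ρh r = 0)
    (hbc : φh R1 = 0)
    (hmass : ∫ r in R1..R2, ρh r * (r : ℂ) = 0) :
    ∀ r ∈ Set.Icc R1 R2, ρh r = 0 ∧ φh r = 0 := by
  have hα0 : α ≠ 0 := hα ▸ div_ne_zero hc2 hΘ.ne'
  have hρs : ∀ r ∈ Ioo R1 R2, 0 < r ∧ 0 < ρstar * r ^ α := fun r hr =>
    have hr0 : 0 < r := hR1.trans hr.1
    ⟨hr0, by positivity⟩
  have hρ' : ∀ r ∈ Ioo R1 R2, HasDerivAt ρh ((α / r) • ρh r) r := fun r hr =>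
    hasDerivAt_smul_of_mul_deriv_eq
      ((hρh.differentiableOn one_ne_zero).differentiableAt (Icc_mem_nhds hr.1 hr.2))
      (div_ne_zero hc2 (mul_ne_zero hα0 (hρs r hr).2.ne'))
      (by have := hρs r hr; field_simp)
      (sub_eq_zero.mp (heq2 r (Ioo_subset_Icc_self hr)))
  have hφ' : ∀ r ∈ Ioo R1 R2, HasDerivAt φh ((-(1 + α) / r) • φh r) r := fun r hr =>
    hasDerivAt_smul_of_mul_deriv_eq
      ((hφh.differentiableOn one_ne_zero).differentiableAt (Icc_mem_nhds hr.1 hr.2))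
      (d := -((1 + α) * (c1 / r) * (ρstar * r ^ α)))
      (mul_ne_zero hc1.ne' (hρs r hr).2.ne')
      (by have := hρs r hr; field_simp)
      (by
        have h := heq1 r (Ioo_subset_Icc_self hr)
        push_cast at h ⊢
        linear_combination h)
  have hρ := eq_div_rpow_smul_of_hasDerivAt hR1 hρh.continuousOn hρ'
  have hφ := eq_div_rpow_smul_of_hasDerivAt hR1 hφh.continuousOn hφ'
  have hρR1 : ρh R1 = 0 := by
    have hint : ∫ r in R1..R2, ρh r * (r : ℂ)
        = ((∫ r in R1..R2, (r / R1) ^ α * r : ℝ) : ℂ) * ρh R1 := by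
      rw [← intervalIntegral.integral_ofReal, ← intervalIntegral.integral_mul_const]
      refine intervalIntegral.integral_congr fun r hr => ?_
      rw [uIcc_of_le hR12.le] at hr
      simp only [hρ r hr, Complex.real_smul]
      push_cast
      ring
    rw [hint] at hmass
    exact (mul_eq_zero.mp hmass).resolve_left
      (Complex.ofReal_ne_zero.mpr (integral_div_rpow_mul_self_pos hR1 hR12).ne')
  intro r hr
  exact ⟨by rw [hρ r hr, hρR1, smul_zero], by rw [hφ r hr, hbc, smul_zero]⟩
end
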